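/- arXiv:1909.01795 — 5 statements merged into one kernel-verified Lean document; each statement's English description precedes it below -/
import Mathlib

section
/- Let f : [S]^[I] → ℝ≥0 be monotone and lattice submodular. Define h on subsets U of [I] × [S] by h(U) = f(u_U) where u_U(i) = max{s : (i,s) ∈ U} (0 if none). Then h is submodular: for all U, V ⊆ [I] × [S], h(U) + h(V) ≥ h(U ∪ V) + h(U ∩ V). -/
open Finset

/-- The state vector induced by a set of item-state pairs: coordinate `i` is the
maximum state `s` (embedded via `Fin.succ` into `{0,…,S}`) with `(i,s) ∈ U`, and `0` if none. -/
noncomputable def uVec {I S : ℕ} (U : Finset (Fin I × Fin S)) : Fin I → Fin (S + 1) :=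
  fun i => (U.filter (fun p => p.1 = i)).sup (fun p => p.2.succ)

lemma key_submod {I S : ℕ} (f : (Fin I → Fin (S + 1)) → ℝ)
    (hlatsub : ∀ u v : Fin I → Fin (S + 1), u ≤ v → ∀ s : Fin S, ∀ i : Fin I,
      f (u ⊔ fun j => if j = i then s.succ else 0) - f u ≥
      f (v ⊔ fun j => if j = i then s.succ else 0) - f v) :
    ∀ (n : ℕ) (v u : Fin I → Fin (S + 1)), (∑ i, (v i).val) = n →
      f u + f v ≥ f (u ⊔ v) + f (u ⊓ v) := by
  intro n
  induction n using Nat.strong_induction_on with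
  | _ n ih =>
    intro v u hsum
    by_cases hvu : v ≤ u
    · have h1 : u ⊔ v = u := sup_eq_left.mpr hvu
      have h2 : u ⊓ v = v := inf_eq_right.mpr hvu
      rw [h1, h2]
    · obtain ⟨i, hi⟩ : ∃ i, u i < v i := by
        simp only [Pi.le_def, not_forall, not_le] at hvu
        exact hvu
      have hvi0 : v i ≠ 0 := by
        intro h
        rw [h] at hi
        exact absurd hi (by simp [Fin.lt_iff_val_lt_val])
      set s : Fin S := (v i).pred hvi0 with hsdef
      have hs : s.succ = v i := Fin.succ_pred _ _
      set v' : Fin I → Fin (S + 1) := Function.update v i (u i) with hv'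
      have hui : u i ≤ v i := le_of_lt hi
      have hve : (v' ⊔ fun j => if j = i then s.succ else 0) = v := by
        funext j
        by_cases hj : j = i
        · subst hj
          simp [Pi.sup_apply, hv', Function.update_self, hs, sup_eq_right.mpr hui]
        · simp [Pi.sup_apply, hv', Function.update_of_ne hj, hj]
      have huve : ((u ⊔ v') ⊔ fun j => if j = i then s.succ else 0) = u ⊔ v := by
        funext j
        by_cases hj : j = i
        · subst hj
          simp [Pi.sup_apply, hv', Function.update_self, hs, sup_eq_right.mpr hui]
        · simp [Pi.sup_apply, hv', Function.update_of_ne hj, hj]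
      have hinf : u ⊓ v' = u ⊓ v := by
        funext j
        by_cases hj : j = i
        · subst hj
          simp [Pi.inf_apply, hv', Function.update_self, inf_eq_left.mpr hui]
        · simp [Pi.inf_apply, hv', Function.update_of_ne hj]
      have hle : v' ≤ u ⊔ v' := le_sup_right
      have hstep := hlatsub v' (u ⊔ v') hle s i
      rw [hve, huve] at hstep
      have hm : (∑ j, (v' j).val) < n := by
        rw [← hsum]
        apply Finset.sum_lt_sum
        · intro j _
          by_cases hj : j = i
          · subst hj
            simp [hv', Function.update_self]
            exact le_of_lt (Fin.lt_iff_val_lt_val.mp hi)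
          · simp [hv', Function.update_of_ne hj]
        · exact ⟨i, Finset.mem_univ i, by
            simp [hv', Function.update_self]
            exact Fin.lt_iff_val_lt_val.mp hi⟩
      have hih := ih _ hm v' u rfl
      rw [hinf] at hih
      linarith only [hstep, hih]

theorem stmt1 {I S : ℕ} (f : (Fin I → Fin (S + 1)) → ℝ)
    (hnonneg : ∀ u, 0 ≤ f u) (hmono : Monotone f)
    (hlatsub : ∀ u v : Fin I → Fin (S + 1), u ≤ v → ∀ s : Fin S, ∀ i : Fin I,
      f (u ⊔ fun j => if j = i then s.succ else 0) - f u ≥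
      f (v ⊔ fun j => if j = i then s.succ else 0) - f v)
    (U V : Finset (Fin I × Fin S)) :
    f (uVec U) + f (uVec V) ≥ f (uVec (U ∪ V)) + f (uVec (U ∩ V)) := by
  have hU : uVec (U ∪ V) = uVec U ⊔ uVec V := by
    funext i
    simp [uVec, Finset.filter_union, Finset.sup_union, Pi.sup_apply]
  have hI : uVec (U ∩ V) ≤ uVec U ⊓ uVec V := by
    intro i
    simp only [Pi.inf_apply, le_inf_iff]
    exact ⟨Finset.sup_mono (Finset.filter_subset_filter _ Finset.inter_subset_left),
      Finset.sup_mono (Finset.filter_subset_filter _ Finset.inter_subset_right)⟩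
  have hkey := key_submod f hlatsub (∑ i, ((uVec V) i).val) (uVec V) (uVec U) rfl
  have h2 : f (uVec (U ∩ V)) ≤ f (uVec U ⊓ uVec V) := hmono hI
  rw [hU]
  linarith
end

section
/- Let h : 2^N → ℝ≥0 be a monotone submodular set function on a finite ground set N with h(∅) = 0, and let H(x) = Σ_{U ⊆ N} h(U) Π_{e ∈ U} x_e Π_{e ∉ U} (1 − x_e) be its multilinear extension on [0,1]^N. If y, z ∈ [0,1]^N satisfy y_e · z_e = 0 for every e ∈ N (disjoint supports) and y + z ∈ [0,1]^N, then H(y) + H(z) ≥ H(y + z). -/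
/-!
Let `R(x)` be the random set containing each `e` independently with probability `x e`. When `y`
and `z` have disjoint supports, the union of independent copies of `R(y)` and `R(z)` has the law
of `R(y + z)`: each `e` is missed with probability `(1 - y e) * (1 - z e) = 1 - (y e + z e)`.
Hence `H(y + z) = E[h(R(y) ∪ R(z))] ≤ E[h(R(y)) + h(R(z))] = H(y) + H(z)`, by subadditivity of a
nonnegative submodular function.
-/

open Finset

/-- The multilinear extension of a set function `h` on a finite ground set. -/
noncomputable def mlExt {N : Type*} [Fintype N] [DecidableEq N]
    (h : Finset N → ℝ) (x : N → ℝ) : ℝ :=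
  ∑ U ∈ (Finset.univ : Finset N).powerset,
    (∏ e ∈ U, x e) * (∏ e ∈ Finset.univ \ U, (1 - x e)) * h U

namespace MultilinearExtension

variable {N : Type*} [DecidableEq N]

/-- The probability that `R(x) ∩ s = U`, for `U ⊆ s`. -/
def subsetProb (x : N → ℝ) (s U : Finset N) : ℝ :=
  (∏ e ∈ U, x e) * ∏ e ∈ s \ U, (1 - x e)

theorem subsetProb_nonneg {x : N → ℝ} (hx : ∀ e, 0 ≤ x e ∧ x e ≤ 1) (s U : Finset N) :
    0 ≤ subsetProb x s U :=
  mul_nonneg (prod_nonneg fun e _ => (hx e).1)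
    (prod_nonneg fun e _ => sub_nonneg.mpr (hx e).2)

theorem sum_powerset_insert_subsetProb_mul (x : N → ℝ) {a : N} {s : Finset N} (ha : a ∉ s)
    (F : Finset N → ℝ) :
    ∑ U ∈ (insert a s).powerset, subsetProb x (insert a s) U * F U
      = ∑ U ∈ s.powerset, subsetProb x s U * ((1 - x a) * F U + x a * F (insert a U)) := by
  rw [sum_powerset_insert ha, ← sum_add_distrib]
  refine sum_congr rfl fun U hU => ?_
  have haU : a ∉ U := fun h => ha (mem_powerset.mp hU h)
  have hsdiff : insert a s \ insert a U = s \ U := by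
    rw [insert_sdiff_insert, sdiff_insert_of_notMem (by simp [ha])]
  simp only [subsetProb]
  rw [insert_sdiff_of_notMem _ haU, hsdiff, prod_insert (by simp [ha]), prod_insert haU]
  ring

theorem sum_subsetProb (x : N → ℝ) (s : Finset N) : ∑ U ∈ s.powerset, subsetProb x s U = 1 := by
  induction s using Finset.induction with
  | empty => simp [subsetProb]
  | @insert a s ha ih =>
    have h := sum_powerset_insert_subsetProb_mul x ha fun _ => 1
    simp only [mul_one, sub_add_cancel] at h
    rw [h, ih]

theorem sum_subsetProb_add_mul (y z : N → ℝ) (hdisj : ∀ e, y e * z e = 0)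
    (s : Finset N) (g : Finset N → ℝ) :
    ∑ U ∈ s.powerset, subsetProb (y + z) s U * g U
      = ∑ A ∈ s.powerset, subsetProb y s A *
          ∑ B ∈ s.powerset, subsetProb z s B * g (A ∪ B) := by
  induction s using Finset.induction generalizing g with
  | empty => simp [subsetProb]
  | @insert a s ha ih =>
    rw [sum_powerset_insert_subsetProb_mul _ ha, ih, sum_powerset_insert_subsetProb_mul y ha]
    refine sum_congr rfl fun A _ => ?_
    simp only [sum_powerset_insert_subsetProb_mul z ha, Pi.add_apply, insert_union, union_insert,
      insert_idem, mul_sum, ← sum_add_distrib]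
    refine sum_congr rfl fun B _ => ?_
    linear_combination subsetProb y s A * subsetProb z s B *
      (g (insert a (A ∪ B)) - g (A ∪ B)) * hdisj a

end MultilinearExtension

open MultilinearExtension

theorem stmt2_general {N : Type*} [Fintype N] [DecidableEq N] (h : Finset N → ℝ)
    (hnonneg : ∀ U, 0 ≤ h U)
    (hsub : ∀ U V : Finset N, h U + h V ≥ h (U ∪ V) + h (U ∩ V))
    (y z : N → ℝ)
    (hy : ∀ e, 0 ≤ y e ∧ y e ≤ 1) (hz : ∀ e, 0 ≤ z e ∧ z e ≤ 1)
    (hdisj : ∀ e, y e * z e = 0) :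
    mlExt h y + mlExt h z ≥ mlExt h (fun e => y e + z e) := by
  have hsubadd : ∀ A B, h (A ∪ B) ≤ h A + h B := fun A B => by
    linarith [hsub A B, hnonneg (A ∩ B)]
  have hsplit : mlExt h y + mlExt h z = ∑ A ∈ univ.powerset, subsetProb y univ A *
      ∑ B ∈ univ.powerset, subsetProb z univ B * (h A + h B) := by
    simp only [mul_add, sum_add_distrib, ← sum_mul, sum_subsetProb, one_mul]
    rfl
  calc mlExt h (fun e => y e + z e)
      = ∑ A ∈ univ.powerset, subsetProb y univ A *
          ∑ B ∈ univ.powerset, subsetProb z univ B * h (A ∪ B) :=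
        sum_subsetProb_add_mul y z hdisj univ h
    _ ≤ _ := by
        gcongr with A _ B _
        · exact subsetProb_nonneg hy _ _
        · exact subsetProb_nonneg hz _ _
        · exact hsubadd A B
    _ = _ := hsplit.symm

theorem stmt2 {N : Type*} [Fintype N] [DecidableEq N] (h : Finset N → ℝ)
    (hnonneg : ∀ U, 0 ≤ h U) (h0 : h ∅ = 0)
    (hmono : ∀ U V : Finset N, U ⊆ V → h U ≤ h V)
    (hsub : ∀ U V : Finset N, h U + h V ≥ h (U ∪ V) + h (U ∩ V))
    (y z : N → ℝ)
    (hy : ∀ e, 0 ≤ y e ∧ y e ≤ 1) (hz : ∀ e, 0 ≤ z e ∧ z e ≤ 1)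
    (hdisj : ∀ e, y e * z e = 0)
    (hyz : ∀ e, y e + z e ≤ 1) :
    mlExt h y + mlExt h z ≥ mlExt h (fun e => y e + z e) :=
  stmt2_general h hnonneg hsub y z hy hz hdisj
end

section
/- Let h : 2^N → ℝ≥0 be monotone submodular with multilinear extension H, and let OPT = h(W) for some fixed W ⊆ N. Then for any x ∈ [0,1]^N, OPT ≤ H(x) + Σ_{e ∈ W} (H(x ∨ 1_e) − H(x)), where (x ∨ 1_e) sets coordinate e to 1 and leaves others unchanged. -/
/-!
For a fixed set `U`, adding the elements of `W` to `U` one at a time and using submodularity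
gives `h W ≤ h (U ∪ W) ≤ h U + ∑ e ∈ W, (h (insert e U) - h U)`. Averaging over `U = R(x)`
yields the claim: `H` is monotone and linear in `h`, and `H (x ∨ 1_e)` is the multilinear
extension of `U ↦ h (insert e U)` evaluated at `x`.
-/

open Finset

theorem submodular_le_add_sum_insert_sub {N : Type*} [DecidableEq N] (h : Finset N → ℝ)
    (hmono : ∀ U V : Finset N, U ⊆ V → h U ≤ h V)
    (hsub : ∀ U V : Finset N, h U + h V ≥ h (U ∪ V) + h (U ∩ V))
    (U W : Finset N) :
    h W ≤ h U + ∑ e ∈ W, (h (insert e U) - h U) := by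
  suffices h (U ∪ W) ≤ h U + ∑ e ∈ W, (h (insert e U) - h U) from
    (hmono _ _ subset_union_right).trans this
  induction W using Finset.induction with
  | empty => simp
  | @insert a s ha ih =>
    have hunion : insert a U ∪ (U ∪ s) = U ∪ insert a s := by
      ext; simp only [mem_union, mem_insert]; tauto
    have hinter : U ⊆ insert a U ∩ (U ∪ s) :=
      subset_inter (subset_insert a U) subset_union_left
    have := hsub (insert a U) (U ∪ s)
    rw [hunion] at this
    rw [sum_insert ha]
    linarith [hmono _ _ hinter]

section MultilinearExtension

variable {N : Type*} [Fintype N] [DecidableEq N]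

/-- The probability that the random set `R(x)` equals `U`. -/
noncomputable def mlWeight (x : N → ℝ) (U : Finset N) : ℝ :=
  (∏ e ∈ U, x e) * ∏ e ∈ univ \ U, (1 - x e)

theorem mlExt_eq_sum_mlWeight_mul (h : Finset N → ℝ) (x : N → ℝ) :
    mlExt h x = ∑ U ∈ univ.powerset, mlWeight x U * h U := rfl

theorem mlWeight_nonneg {x : N → ℝ} (hx : ∀ e, 0 ≤ x e ∧ x e ≤ 1) (U : Finset N) :
    0 ≤ mlWeight x U :=
  mul_nonneg (prod_nonneg fun e _ => (hx e).1)
    (prod_nonneg fun e _ => sub_nonneg.mpr (hx e).2)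

theorem sum_mlWeight (x : N → ℝ) : ∑ U ∈ univ.powerset, mlWeight x U = 1 := by
  simpa [mlWeight] using (prod_add x (fun e => 1 - x e) univ).symm

theorem mlExt_const (c : ℝ) (x : N → ℝ) : mlExt (fun _ => c) x = c := by
  rw [mlExt_eq_sum_mlWeight_mul, ← sum_mul, sum_mlWeight, one_mul]

theorem mlExt_mono {f g : Finset N → ℝ} (hfg : ∀ U, f U ≤ g U) {x : N → ℝ}
    (hx : ∀ e, 0 ≤ x e ∧ x e ≤ 1) : mlExt f x ≤ mlExt g x :=
  sum_le_sum fun U _ => mul_le_mul_of_nonneg_left (hfg U) (mlWeight_nonneg hx U)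

theorem mlExt_add (f g : Finset N → ℝ) (x : N → ℝ) :
    mlExt (fun U => f U + g U) x = mlExt f x + mlExt g x := by
  simp only [mlExt_eq_sum_mlWeight_mul, mul_add, sum_add_distrib]

theorem mlExt_sub (f g : Finset N → ℝ) (x : N → ℝ) :
    mlExt (fun U => f U - g U) x = mlExt f x - mlExt g x := by
  simp only [mlExt_eq_sum_mlWeight_mul, mul_sub, sum_sub_distrib]

theorem mlExt_sum {ι : Type*} (s : Finset ι) (f : ι → Finset N → ℝ) (x : N → ℝ) :
    mlExt (fun U => ∑ i ∈ s, f i U) x = ∑ i ∈ s, mlExt (f i) x := by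
  simp only [mlExt_eq_sum_mlWeight_mul, mul_sum]
  exact sum_comm

/-- The probability that `R(x)` meets `univ \ {e}` exactly in `t`. -/
noncomputable def mlWeightOff (e : N) (x : N → ℝ) (t : Finset N) : ℝ :=
  (∏ a ∈ t, x a) * ∏ a ∈ univ \ insert e t, (1 - x a)

theorem mlWeightOff_congr {x y : N → ℝ} {e : N} (hxy : ∀ a ≠ e, y a = x a) {t : Finset N}
    (he : e ∉ t) : mlWeightOff e y t = mlWeightOff e x t := by
  have hoff : ∀ a ∈ univ \ insert e t, a ≠ e := fun a ha => by aesop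
  unfold mlWeightOff
  congr 1
  · exact prod_congr rfl fun a ha => hxy a (ne_of_mem_of_not_mem ha he)
  · exact prod_congr rfl fun a ha => by rw [hxy a (hoff a ha)]

theorem mlWeight_of_notMem (x : N → ℝ) {e : N} {t : Finset N} (he : e ∉ t) :
    mlWeight x t = (1 - x e) * mlWeightOff e x t := by
  have hcompl : univ \ t = insert e (univ \ insert e t) := by
    ext a; by_cases a = e <;> simp [*]
  rw [mlWeight, mlWeightOff, hcompl, prod_insert (by simp)]
  ring

theorem mlWeight_insert_of_notMem (x : N → ℝ) {e : N} {t : Finset N} (he : e ∉ t) :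
    mlWeight x (insert e t) = x e * mlWeightOff e x t := by
  rw [mlWeight, mlWeightOff, prod_insert he]
  ring

theorem mlExt_update_one (h : Finset N → ℝ) (x : N → ℝ) (e : N) :
    mlExt h (Function.update x e 1) = mlExt (fun U => h (insert e U)) x := by
  have huniv : (univ : Finset N) = insert e (univ.erase e) := (insert_erase (mem_univ e)).symm
  have he : e ∉ univ.erase e := notMem_erase e univ
  rw [mlExt_eq_sum_mlWeight_mul, mlExt_eq_sum_mlWeight_mul, huniv, sum_powerset_insert he,
    sum_powerset_insert he, ← sum_add_distrib, ← sum_add_distrib]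
  refine sum_congr rfl fun t ht => ?_
  have het : e ∉ t := fun hmem => he (mem_powerset.mp ht hmem)
  have hupd : ∀ a ≠ e, Function.update x e 1 a = x a := fun a ha => Function.update_of_ne ha ..
  rw [mlWeight_of_notMem _ het, mlWeight_insert_of_notMem _ het, mlWeight_of_notMem _ het,
    mlWeight_insert_of_notMem _ het, mlWeightOff_congr hupd het, insert_idem,
    Function.update_self]
  ring

end MultilinearExtension

theorem stmt5_general {N : Type*} [Fintype N] [DecidableEq N] (h : Finset N → ℝ)
    (hmono : ∀ U V : Finset N, U ⊆ V → h U ≤ h V)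
    (hsub : ∀ U V : Finset N, h U + h V ≥ h (U ∪ V) + h (U ∩ V))
    (W : Finset N) (OPT : ℝ) (hOPT : OPT = h W)
    (x : N → ℝ) (hx : ∀ e, 0 ≤ x e ∧ x e ≤ 1) :
    OPT ≤ mlExt h x +
      ∑ e ∈ W, (mlExt h (fun e' => if e' = e then 1 else x e') - mlExt h x) := by
  have hupdate (e : N) : (fun e' => if e' = e then 1 else x e') = Function.update x e 1 :=
    funext fun a => (Function.update_apply x e 1 a).symm
  calc OPT = mlExt (fun _ => h W) x := by rw [mlExt_const, hOPT]
    _ ≤ mlExt (fun U => h U + ∑ e ∈ W, (h (insert e U) - h U)) x :=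
      mlExt_mono (submodular_le_add_sum_insert_sub h hmono hsub · W) hx
    _ = _ := by
      simp only [mlExt_add, mlExt_sum, mlExt_sub, hupdate, mlExt_update_one]

theorem stmt5 {N : Type*} [Fintype N] [DecidableEq N] (h : Finset N → ℝ)
    (hnonneg : ∀ U, 0 ≤ h U)
    (hmono : ∀ U V : Finset N, U ⊆ V → h U ≤ h V)
    (hsub : ∀ U V : Finset N, h U + h V ≥ h (U ∪ V) + h (U ∩ V))
    (W : Finset N) (OPT : ℝ) (hOPT : OPT = h W)
    (x : N → ℝ) (hx : ∀ e, 0 ≤ x e ∧ x e ≤ 1) :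
    OPT ≤ mlExt h x +
      ∑ e ∈ W, (mlExt h (fun e' => if e' = e then 1 else x e') - mlExt h x) :=
  stmt5_general h hmono hsub W OPT hOPT x hx
end

section
/- Let h : 2^N → ℝ≥0 be monotone submodular with h(∅)=0 and multilinear extension H. Partition the ground set as N = N₁ ⊎ N₂, and for y ∈ [0,1]^N let y¹ agree with y on N₁ and be 0 on N₂, and y² agree with y on N₂ and be 0 on N₁. Then H(y¹) + H(y²) ≥ H(y). -/
/-!
Write `R(y) = R₁ ∪ R₂` with `Rᵢ = R(y) ∩ Nᵢ`. Then `R₁` is distributed as `R(y¹)` and `R₂` as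
`R(y²)`, and `R₁, R₂` are disjoint, so `h(R₁ ∪ R₂) ≤ h(R₁) + h(R₂)` by submodularity and
`h(∅) = 0`; taking expectations gives the claim. Concretely, the expectation over `R(y)` factors
as a double sum over `A ⊆ N₁`, `B ⊆ N₂` with product weights.
-/

open Finset

theorem Finset.sum_powerset_union_of_disjoint {α β : Type*} [DecidableEq α] [AddCommMonoid β]
    {s t : Finset α} (hst : Disjoint s t) (f : Finset α → β) :
    ∑ u ∈ (s ∪ t).powerset, f u = ∑ a ∈ s.powerset, ∑ b ∈ t.powerset, f (a ∪ b) := by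
  rw [← sum_product' (f := fun a b => f (a ∪ b))]
  refine sum_nbij' (fun u => (u ∩ s, u ∩ t)) (fun p => p.1 ∪ p.2) ?_ ?_ ?_ ?_ ?_
  all_goals intro u hu; simp only [mem_powerset, mem_product] at *
  · exact ⟨inter_subset_right, inter_subset_right⟩
  · exact union_subset_union hu.1 hu.2
  · rw [← inter_union_distrib_left, inter_eq_left.2 hu]
  · ext e <;> simp only [mem_inter, mem_union] <;> grind [disjoint_left]
  · rw [← inter_union_distrib_left, inter_eq_left.2 hu]

theorem Finset.sum_sum_mul_mul_add_of_sum_eq_one {ι κ R : Type*} [CommSemiring R]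
    {s : Finset ι} {t : Finset κ} {p : ι → R} {q : κ → R}
    (hp : ∑ a ∈ s, p a = 1) (hq : ∑ b ∈ t, q b = 1) (f : ι → R) (g : κ → R) :
    ∑ a ∈ s, ∑ b ∈ t, p a * q b * (f a + g b) = ∑ a ∈ s, p a * f a + ∑ b ∈ t, q b * g b := by
  simp only [mul_add, sum_add_distrib]
  rw [sum_comm (s := s) (f := fun a b => p a * q b * g b)]
  simp only [mul_right_comm _ (q _), ← sum_mul, ← mul_sum, hp, hq, one_mul, mul_one]
  simp only [mul_comm (g _)]

section SetWeight

variable {N : Type*} [DecidableEq N]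

/-- For `U ⊆ S`, the probability that `R(x) ∩ S = U`, where `R(x)` contains each `e`
independently with probability `x e`. -/
def setWeight (S : Finset N) (x : N → ℝ) (U : Finset N) : ℝ :=
  (∏ e ∈ U, x e) * ∏ e ∈ S \ U, (1 - x e)

lemma setWeight_nonneg {x : N → ℝ} (hx : ∀ e, 0 ≤ x e ∧ x e ≤ 1) (S U : Finset N) :
    0 ≤ setWeight S x U :=
  mul_nonneg (prod_nonneg fun e _ => (hx e).1) (prod_nonneg fun e _ => sub_nonneg.2 (hx e).2)

lemma sum_setWeight (S : Finset N) (x : N → ℝ) : ∑ U ∈ S.powerset, setWeight S x U = 1 := by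
  simpa [setWeight] using (prod_add x (fun e => 1 - x e) S).symm

lemma setWeight_congr {S U : Finset N} {x x' : N → ℝ} (hU : U ⊆ S) (hx : ∀ e ∈ S, x e = x' e) :
    setWeight S x U = setWeight S x' U := by
  unfold setWeight
  rw [prod_congr rfl fun e he => hx e (hU he),
    prod_congr rfl fun e he => congrArg (1 - ·) (hx e (mem_sdiff.1 he).1)]

lemma setWeight_union {S T A B : Finset N} (hST : Disjoint S T) (hA : A ⊆ S) (hB : B ⊆ T)
    (x : N → ℝ) :
    setWeight (S ∪ T) x (A ∪ B) = setWeight S x A * setWeight T x B := by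
  have hsdiff : (S ∪ T) \ (A ∪ B) = (S \ A) ∪ (T \ B) := by
    ext e; simp only [mem_sdiff, mem_union, not_or]; grind [disjoint_left]
  unfold setWeight
  rw [hsdiff, prod_union (hST.mono hA hB), prod_union (hST.mono sdiff_subset sdiff_subset)]
  ring

lemma setWeight_of_eq_zero {T B : Finset N} {x : N → ℝ} (hx : ∀ e ∈ T, x e = 0) (hB : B ⊆ T) :
    setWeight T x B = if B = ∅ then 1 else 0 := by
  split_ifs with hB0
  · simp only [setWeight, hB0, prod_empty, sdiff_empty, one_mul]
    exact prod_eq_one fun e he => by rw [hx e he, sub_zero]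
  · obtain ⟨e, he⟩ := nonempty_iff_ne_empty.2 hB0
    exact mul_eq_zero_of_left (prod_eq_zero he (hx e (hB he))) _

variable [Fintype N]

lemma mlExt_eq_sum_setWeight (h : Finset N → ℝ) (x : N → ℝ) :
    mlExt h x = ∑ U ∈ univ.powerset, setWeight univ x U * h U := rfl

lemma mlExt_eq_sum_sum {S T : Finset N} (hST : Disjoint S T) (hcover : S ∪ T = univ)
    (h : Finset N → ℝ) (x : N → ℝ) :
    mlExt h x = ∑ A ∈ S.powerset, ∑ B ∈ T.powerset,
      setWeight S x A * setWeight T x B * h (A ∪ B) := by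
  rw [mlExt_eq_sum_setWeight, ← hcover, sum_powerset_union_of_disjoint hST]
  refine sum_congr rfl fun A hA => sum_congr rfl fun B hB => ?_
  rw [setWeight_union hST (mem_powerset.1 hA) (mem_powerset.1 hB)]

lemma mlExt_of_eq_zero {S : Finset N} {x : N → ℝ} (hx : ∀ e ∉ S, x e = 0) (h : Finset N → ℝ) :
    mlExt h x = ∑ A ∈ S.powerset, setWeight S x A * h A := by
  rw [mlExt_eq_sum_sum disjoint_sdiff (union_sdiff_of_subset (subset_univ S))]
  refine sum_congr rfl fun A _ => ?_
  rw [sum_congr rfl fun B hB => by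
    rw [setWeight_of_eq_zero (fun e he => hx e (mem_sdiff.1 he).2) (mem_powerset.1 hB)]]
  simp

lemma mlExt_restrict (S : Finset N) (h : Finset N → ℝ) (y : N → ℝ) :
    mlExt h (fun e => if e ∈ S then y e else 0) = ∑ A ∈ S.powerset, setWeight S y A * h A := by
  rw [mlExt_of_eq_zero fun e he => if_neg he]
  exact sum_congr rfl fun A hA => by rw [setWeight_congr (mem_powerset.1 hA) fun e he => if_pos he]

end SetWeight

lemma apply_union_le_add_of_disjoint {N : Type*} [DecidableEq N] {h : Finset N → ℝ} (h0 : h ∅ = 0)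
    (hsub : ∀ U V : Finset N, h U + h V ≥ h (U ∪ V) + h (U ∩ V)) {A B : Finset N}
    (hAB : Disjoint A B) : h (A ∪ B) ≤ h A + h B := by
  have := hsub A B
  rw [disjoint_iff_inter_eq_empty.1 hAB, h0] at this
  linarith

theorem stmt12_general {N : Type*} [Fintype N] [DecidableEq N]
    (h : Finset N → ℝ) (h0 : h ∅ = 0)
    (hsub : ∀ U V : Finset N, h U + h V ≥ h (U ∪ V) + h (U ∩ V))
    (N₁ N₂ : Finset N) (hdisj : Disjoint N₁ N₂) (hcover : N₁ ∪ N₂ = Finset.univ)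
    (y : N → ℝ) (hy : ∀ e, 0 ≤ y e ∧ y e ≤ 1) :
    mlExt h (fun e => if e ∈ N₁ then y e else 0) +
    mlExt h (fun e => if e ∈ N₂ then y e else 0) ≥ mlExt h y := by
  rw [mlExt_restrict, mlExt_restrict, ge_iff_le, mlExt_eq_sum_sum hdisj hcover,
    ← sum_sum_mul_mul_add_of_sum_eq_one (sum_setWeight N₁ y) (sum_setWeight N₂ y)]
  refine sum_le_sum fun A hA => sum_le_sum fun B hB => ?_
  exact mul_le_mul_of_nonneg_left
    (apply_union_le_add_of_disjoint h0 hsub (hdisj.mono (mem_powerset.1 hA) (mem_powerset.1 hB)))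
    (mul_nonneg (setWeight_nonneg hy _ _) (setWeight_nonneg hy _ _))

theorem stmt12 {N : Type*} [Fintype N] [DecidableEq N]
    (h : Finset N → ℝ) (hnonneg : ∀ U, 0 ≤ h U) (h0 : h ∅ = 0)
    (hmono : ∀ U V : Finset N, U ⊆ V → h U ≤ h V)
    (hsub : ∀ U V : Finset N, h U + h V ≥ h (U ∪ V) + h (U ∩ V))
    (N₁ N₂ : Finset N) (hdisj : Disjoint N₁ N₂) (hcover : N₁ ∪ N₂ = Finset.univ)
    (y : N → ℝ) (hy : ∀ e, 0 ≤ y e ∧ y e ≤ 1) :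
    mlExt h (fun e => if e ∈ N₁ then y e else 0) +
    mlExt h (fun e => if e ∈ N₂ then y e else 0) ≥ mlExt h y :=
  stmt12_general h h0 hsub N₁ N₂ hdisj hcover y hy
end

section
/- Let h : 2^N → ℝ≥0 be monotone submodular with h(∅) = 0, with multilinear extension H. Suppose G is a random subset of N with |G| ≤ 1 almost surely and P[e ∈ G] ≥ y_e/8 for every e ∈ N, where y ∈ [0,1]^N. Then E[h(G)] ≥ Σ_{e ∈ N} (y_e/8)·h({e}) ≥ H(y/8) ≥ H(y)/8. -/
/-!
For `|G| ≤ 1` and `h ∅ = 0` we have `h G = ∑ e ∈ G, h {e}`, so `E[h G] = ∑ e, P[e ∈ G] h {e}`.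
The two bounds on the multilinear extension `H` are proved by induction on the ground set,
peeling off one element `a`: `H = x a * H(h (· ∪ {a})) + (1 - x a) * H(h)`, where submodularity
enters only through diminishing returns, `h (insert a U) - h U ≤ h {a} - h ∅`.
-/

open Finset

theorem sum_mul_sum_eq_sum_marginal {Ω N R : Type*} [Fintype Ω] [Fintype N] [DecidableEq N]
    [CommSemiring R]
    (p : Ω → R) (G : Ω → Finset N) (f : N → R) :
    ∑ ω, p ω * ∑ e ∈ G ω, f e = ∑ e, (∑ ω ∈ univ.filter (fun ω => e ∈ G ω), p ω) * f e := by
  simp_rw [mul_sum, sum_mul]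
  exact sum_comm' (s' := fun e => univ.filter (fun ω => e ∈ G ω)) (by simp)

theorem eq_sum_singleton_of_card_le_one {N : Type*} {h : Finset N → ℝ} (h0 : h ∅ = 0)
    {s : Finset N} (hs : s.card ≤ 1) : h s = ∑ e ∈ s, h {e} := by
  rcases Nat.le_one_iff_eq_zero_or_eq_one.1 hs with hs | hs
  · simp [card_eq_zero.1 hs, h0]
  · obtain ⟨e, rfl⟩ := card_eq_one.1 hs
    simp

section SetFunction

variable {N : Type*} [DecidableEq N]

def Submodular (h : Finset N → ℝ) : Prop :=
  ∀ U V, h (U ∪ V) + h (U ∩ V) ≤ h U + h V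

namespace Submodular

variable {h : Finset N → ℝ}

theorem comp_insert (hh : Submodular h) (a : N) : Submodular (fun U => h (insert a U)) := by
  intro U V
  simpa only [insert_union_distrib, insert_inter_distrib] using hh (insert a U) (insert a V)

theorem insert_sub_le (hh : Submodular h) {a : N} {U : Finset N} (ha : a ∉ U) :
    h (insert a U) - h U ≤ h {a} - h ∅ := by
  have := hh {a} U
  rw [← insert_eq, singleton_inter_of_notMem ha] at this
  linarith

end Submodular

noncomputable def mlExtOn (h : Finset N → ℝ) (x : N → ℝ) (A : Finset N) : ℝ :=
  ∑ U ∈ A.powerset, (∏ e ∈ U, x e) * (∏ e ∈ A \ U, (1 - x e)) * h U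

theorem mlExt_eq_mlExtOn_univ [Fintype N] (h : Finset N → ℝ) (x : N → ℝ) :
    mlExt h x = mlExtOn h x univ :=
  rfl

variable {h : Finset N → ℝ} {x : N → ℝ} {A : Finset N}

@[simp]
theorem mlExtOn_empty : mlExtOn h x ∅ = h ∅ := by
  simp [mlExtOn]

theorem mlExtOn_insert {a : N} (ha : a ∉ A) :
    mlExtOn h x (insert a A) =
      x a * mlExtOn (fun U => h (insert a U)) x A + (1 - x a) * mlExtOn h x A := by
  rw [mlExtOn, sum_powerset_insert ha, mlExtOn, mlExtOn, mul_sum, mul_sum, add_comm]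
  congr 1 <;> refine sum_congr rfl fun U hU => ?_
  · have haU : a ∉ U := fun haU => ha (mem_powerset.1 hU haU)
    rw [prod_insert haU, insert_sdiff_insert, sdiff_insert_of_notMem ha]
    ring
  · rw [insert_sdiff_of_notMem _ fun haU => ha (mem_powerset.1 hU haU),
      prod_insert (fun haA => ha (mem_sdiff.1 haA).1)]
    ring

theorem mlExtOn_add_const (h : Finset N → ℝ) (c : ℝ) (x : N → ℝ) (A : Finset N) :
    mlExtOn (fun U => h U + c) x A = mlExtOn h x A + c := by
  induction A using Finset.induction_on generalizing h with
  | empty => simp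
  | insert a A ha ih =>
    rw [mlExtOn_insert ha, mlExtOn_insert ha, ih, ih]
    ring

theorem mlExtOn_mono {g : Finset N → ℝ} (hx : ∀ e, 0 ≤ x e ∧ x e ≤ 1)
    (hhg : ∀ U ⊆ A, h U ≤ g U) : mlExtOn h x A ≤ mlExtOn g x A := by
  refine sum_le_sum fun U hU => mul_le_mul_of_nonneg_left (hhg U (mem_powerset.1 hU)) ?_
  exact mul_nonneg (prod_nonneg fun e _ => (hx e).1)
    (prod_nonneg fun e _ => sub_nonneg.2 (hx e).2)

theorem Submodular.mlExtOn_le (hh : Submodular h) (hx : ∀ e, 0 ≤ x e ∧ x e ≤ 1) :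
    mlExtOn h x A ≤ h ∅ + ∑ e ∈ A, x e * (h {e} - h ∅) := by
  induction A using Finset.induction_on generalizing h with
  | empty => simp
  | insert a A ha ih =>
    have ih_a := ih (hh.comp_insert a)
    simp only [insert_empty] at ih_a
    have hxa : 0 ≤ 1 - x a := sub_nonneg.2 (hx a).2
    have marginal_le : ∑ e ∈ A, x e * (h (insert a {e}) - h {a}) ≤
        ∑ e ∈ A, x e * (h {e} - h ∅) := by
      refine sum_le_sum fun e he => mul_le_mul_of_nonneg_left ?_ (hx e).1
      have := hh.insert_sub_le (a := a) (U := {e}) (notMem_singleton.2 fun hae => ha (hae ▸ he))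
      linarith
    rw [mlExtOn_insert ha, sum_insert ha]
    calc x a * mlExtOn (fun U => h (insert a U)) x A + (1 - x a) * mlExtOn h x A
        ≤ x a * (h {a} + ∑ e ∈ A, x e * (h {e} - h ∅)) +
            (1 - x a) * (h ∅ + ∑ e ∈ A, x e * (h {e} - h ∅)) := by
          gcongr
          · exact (hx a).1
          · exact ih_a.trans (by linarith)
          · exact ih hh
      _ = h ∅ + (x a * (h {a} - h ∅) + ∑ e ∈ A, x e * (h {e} - h ∅)) := by ring

theorem Submodular.mlExtOn_smul_ge (hh : Submodular h) {y : N → ℝ}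
    (hy : ∀ e, 0 ≤ y e ∧ y e ≤ 1) {t : ℝ} (ht0 : 0 ≤ t) (ht1 : t ≤ 1) :
    t * mlExtOn h y A + (1 - t) * h ∅ ≤ mlExtOn h (t • y) A := by
  induction A using Finset.induction_on generalizing h with
  | empty =>
    simp only [mlExtOn_empty]
    linarith
  | insert a A ha ih =>
    have ih_a := ih (hh.comp_insert a)
    simp only [insert_empty] at ih_a
    have insert_le : mlExtOn (fun U => h (insert a U)) y A ≤ mlExtOn h y A + (h {a} - h ∅) := by
      rw [← mlExtOn_add_const]
      refine mlExtOn_mono hy fun U hU => ?_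
      have := hh.insert_sub_le fun haU => ha (hU haU)
      linarith
    have hya : 0 ≤ 1 - t * y a := by nlinarith [hy a]
    rw [mlExtOn_insert ha, mlExtOn_insert ha]
    simp only [Pi.smul_apply, smul_eq_mul]
    calc t * (y a * mlExtOn (fun U => h (insert a U)) y A + (1 - y a) * mlExtOn h y A) +
          (1 - t) * h ∅
        ≤ t * y a * (t * mlExtOn (fun U => h (insert a U)) y A + (1 - t) * h {a}) +
            (1 - t * y a) * (t * mlExtOn h y A + (1 - t) * h ∅) := by
          -- the difference is `t y_a (1 - t)` times the slack in `insert_le`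
          have := mul_le_mul_of_nonneg_left insert_le
            (mul_nonneg (mul_nonneg ht0 (hy a).1) (sub_nonneg.2 ht1))
          linear_combination this
      _ ≤ t * y a * mlExtOn (fun U => h (insert a U)) (t • y) A +
            (1 - t * y a) * mlExtOn h (t • y) A := by
          exact add_le_add (mul_le_mul_of_nonneg_left ih_a (mul_nonneg ht0 (hy a).1))
            (mul_le_mul_of_nonneg_left (ih hh) hya)

end SetFunction

theorem stmt16_general {N : Type*} [Fintype N] [DecidableEq N]
    {Ω : Type*} [Fintype Ω]
    (h : Finset N → ℝ) (hnonneg : ∀ U, 0 ≤ h U) (h0 : h ∅ = 0)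
    (hsub : ∀ U V : Finset N, h U + h V ≥ h (U ∪ V) + h (U ∩ V))
    (p : Ω → ℝ)
    (G : Ω → Finset N) (hcard : ∀ ω, (G ω).card ≤ 1)
    (y : N → ℝ) (hy : ∀ e, 0 ≤ y e ∧ y e ≤ 1)
    (hmarg : ∀ e, y e / 8 ≤ ∑ ω ∈ Finset.univ.filter (fun ω => e ∈ G ω), p ω) :
    (∑ ω, p ω * h (G ω)) ≥ ∑ e, (y e / 8) * h {e} ∧
    (∑ e, (y e / 8) * h {e}) ≥ mlExt h (fun e => y e / 8) ∧
    mlExt h (fun e => y e / 8) ≥ mlExt h y / 8 := by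
  have hh : Submodular h := hsub
  have hy8 : (fun e => y e / 8) = (8⁻¹ : ℝ) • y := by
    ext e
    simp only [div_eq_inv_mul, Pi.smul_apply, smul_eq_mul]
  refine ⟨?_, ?_, ?_⟩
  · simp_rw [eq_sum_singleton_of_card_le_one h0 (hcard _), sum_mul_sum_eq_sum_marginal]
    exact sum_le_sum fun e _ => mul_le_mul_of_nonneg_right (hmarg e) (hnonneg _)
  · have := hh.mlExtOn_le (A := univ) (x := fun e => y e / 8)
      fun e => ⟨by linarith [hy e], by linarith [hy e]⟩
    rw [mlExt_eq_mlExtOn_univ]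
    simpa [h0] using this
  · have := hh.mlExtOn_smul_ge (A := univ) hy (t := 8⁻¹) (by norm_num) (by norm_num)
    rw [hy8, mlExt_eq_mlExtOn_univ, mlExt_eq_mlExtOn_univ]
    linarith

theorem stmt16 {N : Type*} [Fintype N] [DecidableEq N]
    {Ω : Type*} [Fintype Ω]
    (h : Finset N → ℝ) (hnonneg : ∀ U, 0 ≤ h U) (h0 : h ∅ = 0)
    (hmono : ∀ U V : Finset N, U ⊆ V → h U ≤ h V)
    (hsub : ∀ U V : Finset N, h U + h V ≥ h (U ∪ V) + h (U ∩ V))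
    (p : Ω → ℝ) (hp : ∀ ω, 0 ≤ p ω) (hp1 : ∑ ω, p ω = 1)
    (G : Ω → Finset N) (hcard : ∀ ω, (G ω).card ≤ 1)
    (y : N → ℝ) (hy : ∀ e, 0 ≤ y e ∧ y e ≤ 1)
    (hmarg : ∀ e, y e / 8 ≤ ∑ ω ∈ Finset.univ.filter (fun ω => e ∈ G ω), p ω) :
    (∑ ω, p ω * h (G ω)) ≥ ∑ e, (y e / 8) * h {e} ∧
    (∑ e, (y e / 8) * h {e}) ≥ mlExt h (fun e => y e / 8) ∧
    mlExt h (fun e => y e / 8) ≥ mlExt h y / 8 :=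
  stmt16_general h hnonneg h0 hsub p G hcard y hy hmarg
end
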